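/- Let rk be a polymatroid rank function on {1,…,n} and v ∈ ℤⁿ with v in the base polytope Q(rk). Fix 0 < ε < 1. Then the following are equivalent: (1) Σ_{i=1}^s v_i = rk({1,…,s}) for every s = 1,…,n; (2) v + ε(e_j − e_k) ∉ Q(rk) for all j < k. -/

import Mathlib

/-- A (discrete) polymatroid rank function on the ground set `X`. -/
def IsPolymatroid {α : Type*} [DecidableEq α] (X : Finset α) (rk : Finset α → ℕ) : Prop :=
  rk ∅ = 0 ∧
  (∀ A B : Finset α, A ⊆ B → B ⊆ X → rk A ≤ rk B) ∧
  (∀ A B : Finset α, A ⊆ X → B ⊆ X → rk (A ∪ B) + rk (A ∩ B) ≤ rk A + rk B)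

/-- Membership of a real vector in the base polytope `Q(rk)`. -/
def InBasePolytope (n : ℕ) (rk : Finset (Fin n) → ℕ) (w : Fin n → ℝ) : Prop :=
  (∑ i, w i = (rk Finset.univ : ℝ)) ∧
  ∀ A : Finset (Fin n), ∑ i ∈ A, w i ≤ (rk A : ℝ)

/-!
Call `A` tight when `v(A) = rk(A)`. Since `v` is integral, a set containing `j` but not `k` is
either tight or has slack at least `1 > ε`, so the move `v + ε(e_j − e_k)` leaves `Q(rk)` exactly
when some tight set contains `j` but not `k`. By submodularity the tight sets form a lattice.
If every `i` is separated in this way from all later `k`, the smallest tight set containing `i`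
lies in `{1,…,i}`, and the prefix `{1,…,s}` is the union of these sets for `i ≤ s`, hence tight.
-/

open Finset

section Tight

variable {α : Type*} {rk : Finset α → ℕ} {v : α → ℤ}

def IsTight (rk : Finset α → ℕ) (v : α → ℤ) (A : Finset α) : Prop :=
  ∑ i ∈ A, v i = (rk A : ℤ)

theorem isTight_empty (h0 : rk ∅ = 0) : IsTight rk v ∅ := by
  simp [IsTight, h0]

theorem IsTight.union_and_inter [DecidableEq α]
    (hsub : ∀ A B : Finset α, rk (A ∪ B) + rk (A ∩ B) ≤ rk A + rk B)
    (hle : ∀ A : Finset α, ∑ i ∈ A, v i ≤ (rk A : ℤ)) {A B : Finset α}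
    (hA : IsTight rk v A) (hB : IsTight rk v B) :
    IsTight rk v (A ∪ B) ∧ IsTight rk v (A ∩ B) := by
  have hsubAB : (rk (A ∪ B) : ℤ) + rk (A ∩ B) ≤ rk A + rk B := mod_cast hsub A B
  have hsum : ∑ i ∈ A ∪ B, v i + ∑ i ∈ A ∩ B, v i = ∑ i ∈ A, v i + ∑ i ∈ B, v i :=
    sum_union_inter
  have hleU := hle (A ∪ B)
  have hleI := hle (A ∩ B)
  unfold IsTight at *
  omega

theorem exists_minimal_isTight_mem [Fintype α] [DecidableEq α]
    (hsub : ∀ A B : Finset α, rk (A ∪ B) + rk (A ∩ B) ≤ rk A + rk B)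
    (hle : ∀ A : Finset α, ∑ i ∈ A, v i ≤ (rk A : ℤ)) (huniv : IsTight rk v univ) (j : α) :
    ∃ C, IsTight rk v C ∧ j ∈ C ∧ ∀ A, IsTight rk v A → j ∈ A → C ⊆ A := by
  classical
  let C := (univ.filter fun A => IsTight rk v A ∧ j ∈ A).inf id
  obtain ⟨hC, hjC⟩ : IsTight rk v C ∧ j ∈ C :=
    inf_induction (p := fun C => IsTight rk v C ∧ j ∈ C) ⟨huniv, mem_univ j⟩
      (fun _ h₁ _ h₂ => ⟨(h₁.1.union_and_inter hsub hle h₂.1).2, mem_inter.2 ⟨h₁.2, h₂.2⟩⟩)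
      (fun A hA => (mem_filter.1 hA).2)
  exact ⟨C, hC, hjC, fun A hA hjA => inf_le (f := id) (mem_filter.2 ⟨mem_univ A, hA, hjA⟩)⟩

theorem forall_isTight_Iic_iff [Fintype α] [LinearOrder α] [LocallyFiniteOrderBot α]
    (hsub : ∀ A B : Finset α, rk (A ∪ B) + rk (A ∩ B) ≤ rk A + rk B)
    (hle : ∀ A : Finset α, ∑ i ∈ A, v i ≤ (rk A : ℤ)) (h0 : rk ∅ = 0)
    (huniv : IsTight rk v univ) :
    (∀ j, IsTight rk v (Iic j)) ↔ ∀ j k : α, j < k → ∃ A, IsTight rk v A ∧ j ∈ A ∧ k ∉ A := by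
  refine ⟨fun h j k hjk => ⟨Iic j, h j, mem_Iic.2 le_rfl, fun hk => (mem_Iic.1 hk).not_gt hjk⟩,
    fun hsep j => ?_⟩
  choose C hC hiC hCmin using exists_minimal_isTight_mem hsub hle huniv
  have hC_Iic : ∀ i, C i ⊆ Iic i := by
    intro i k hk
    by_contra hki
    obtain ⟨A, hA, hiA, hkA⟩ := hsep i k (not_le.1 (mt mem_Iic.2 hki))
    exact hkA (hCmin i A hA hiA hk)
  have hIic : Iic j = (Iic j).sup C :=
    le_antisymm (fun i hi => mem_sup.2 ⟨i, hi, hiC i⟩)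
      (Finset.sup_le fun i hi => (hC_Iic i).trans (Iic_subset_Iic.2 (mem_Iic.1 hi)))
  rw [hIic]
  exact sup_induction (isTight_empty h0) (fun _ h₁ _ h₂ => (h₁.union_and_inter hsub hle h₂).1)
    fun i _ => hC i

end Tight

theorem inBasePolytope_intCast_iff {n : ℕ} {rk : Finset (Fin n) → ℕ} {v : Fin n → ℤ} :
    InBasePolytope n rk (fun i => (v i : ℝ)) ↔
      IsTight rk v univ ∧ ∀ A, ∑ i ∈ A, v i ≤ (rk A : ℤ) := by
  simp only [InBasePolytope, IsTight]
  norm_cast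

theorem not_inBasePolytope_move_iff {n : ℕ} {rk : Finset (Fin n) → ℕ} {v : Fin n → ℤ}
    (hv : InBasePolytope n rk (fun i => (v i : ℝ))) {ε : ℝ} (hε0 : 0 < ε) (hε1 : ε ≤ 1)
    (j k : Fin n) :
    ¬ InBasePolytope n rk
        (fun i => (v i : ℝ) + (if i = j then ε else 0) - (if i = k then ε else 0)) ↔
      ∃ A, IsTight rk v A ∧ j ∈ A ∧ k ∉ A := by
  have hleZ := (inBasePolytope_intCast_iff.1 hv).2
  obtain ⟨htot, hle⟩ := hv
  have hsum (A : Finset (Fin n)) :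
      ∑ i ∈ A, ((v i : ℝ) + (if i = j then ε else 0) - (if i = k then ε else 0)) =
        ∑ i ∈ A, (v i : ℝ) + (if j ∈ A then ε else 0) - (if k ∈ A then ε else 0) := by
    rw [sum_sub_distrib, sum_add_distrib, sum_ite_eq', sum_ite_eq']
  constructor
  · intro hw
    by_contra! hsep
    refine hw ⟨by rw [hsum, if_pos (mem_univ j), if_pos (mem_univ k)]; linarith, fun A => ?_⟩
    rw [hsum]
    by_cases hjA : j ∈ A
    · by_cases hkA : k ∈ A
      · simp only [if_pos hjA, if_pos hkA]
        linarith [hle A]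
      · have hslack : ∑ i ∈ A, v i + 1 ≤ (rk A : ℤ) :=
          Int.add_one_le_of_lt <| lt_of_le_of_ne (hleZ A) fun h => hkA (hsep A h hjA)
        have hslackR : ∑ i ∈ A, (v i : ℝ) + 1 ≤ rk A := mod_cast hslack
        simp only [if_pos hjA, if_neg hkA]
        linarith
    · rw [if_neg hjA]
      split_ifs <;> linarith [hle A]
  · rintro ⟨A, hA, hjA, hkA⟩ ⟨-, hw⟩
    have hwA := hw A
    have hAR : ∑ i ∈ A, (v i : ℝ) = rk A := mod_cast hA
    rw [hsum, if_pos hjA, if_neg hkA] at hwA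
    linarith

theorem forall_prefix_iff_forall_Iic {n : ℕ} (P : Finset (Fin n) → Prop) :
    (∀ s : ℕ, 1 ≤ s → s ≤ n → P (univ.filter fun i : Fin n => (i : ℕ) < s)) ↔
      ∀ j : Fin n, P (Iic j) := by
  refine ⟨fun h j => ?_, fun h s hs1 hsn => ?_⟩
  · have hj : Iic j = univ.filter fun i : Fin n => (i : ℕ) < (j : ℕ) + 1 := by
      ext i
      simp only [mem_Iic, Fin.le_def, mem_filter, mem_univ, true_and]
      omega
    exact hj ▸ h _ (by omega) j.2
  · have hs : (univ.filter fun i : Fin n => (i : ℕ) < s) = Iic ⟨s - 1, by omega⟩ := by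
      ext i
      simp only [mem_Iic, Fin.le_def, mem_filter, mem_univ, true_and]
      omega
    exact hs ▸ h _

/-- For an integer point `v ∈ Q(rk)` and `0 < ε < 1`: all prefix sums of `v` realize the
prefix ranks iff `v + ε(e_j − e_k) ∉ Q(rk)` for all `j < k`. -/
theorem prefix_rank_iff_no_move (n : ℕ) (rk : Finset (Fin n) → ℕ)
    (hrk : IsPolymatroid Finset.univ rk) (v : Fin n → ℤ)
    (hv : InBasePolytope n rk (fun i => (v i : ℝ)))
    (ε : ℝ) (hε0 : 0 < ε) (hε1 : ε < 1) :
    ((∀ s : ℕ, 1 ≤ s → s ≤ n →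
        ∑ i ∈ Finset.univ.filter (fun i : Fin n => (i : ℕ) < s), v i
          = (rk (Finset.univ.filter (fun i : Fin n => (i : ℕ) < s)) : ℤ))
      ↔ (∀ j k : Fin n, j < k →
        ¬ InBasePolytope n rk
            (fun i => (v i : ℝ) + (if i = j then ε else 0) - (if i = k then ε else 0)))) := by
  obtain ⟨hrk0, -, hsub⟩ := hrk
  have hsub' : ∀ A B : Finset (Fin n), rk (A ∪ B) + rk (A ∩ B) ≤ rk A + rk B :=
    fun A B => hsub A B (subset_univ A) (subset_univ B)
  obtain ⟨huniv, hle⟩ := inBasePolytope_intCast_iff.1 hv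
  exact (forall_prefix_iff_forall_Iic (IsTight rk v)).trans <|
    (forall_isTight_Iic_iff hsub' hle hrk0 huniv).trans <|
      forall₂_congr fun j k => forall_congr' fun _ =>
        (not_inBasePolytope_move_iff hv hε0 hε1.le j k).symm
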